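/- (Dual second-order KKT conditions for the scalar problem.) Let x̄ be a local minimizer of the scalar problem (P) (i.e., n = 1) and let d be a nonzero critical direction at x̄. Suppose Conditions (C) are satisfied, and assume both the second-order Zangwill constraint qualification cl(A(x̄,d)) = B(x̄,d) and the Guignard constraint qualification L(x̄) = PT(S,x̄) hold (and that the second-order directional derivatives f''(x̄,d) and g_i''(x̄,d), i ∈ I(x̄), exist). Then there exist nonnegative Lagrange multipliers μ_1,…,μ_m ≥ 0 such that μ_i g_i(x̄) = 0 for i = 1,…,m, ∇f(x̄) + Σ_{i=1}^m μ_i ∇g_i(x̄) = 0, and f''(x̄,d) + Σ_{i ∈ I(x̄)} μ_i g_i''(x̄,d) ≥ 0. -/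

import Mathlib

/-!
Every Bouligand tangent direction `u` of the feasible set satisfies `∇f(x̄)u ≥ 0` by local
minimality, and a closed half-space contains the closed convex hull of what it contains, so the
Guignard condition gives `∇f(x̄)u ≥ 0` on the linearizing cone. For `z ∈ A(x̄,d)` the parabola
`x̄ + td + (t²/2)z` is feasible for small `t > 0`, and expanding `f` along it (strict
differentiability plus `f''(x̄,d)`) gives `∇f(x̄)z + f''(x̄,d) ≥ 0`; the Zangwill condition
extends this to `B(x̄,d)`. Together: `∇f(x̄)z + t f''(x̄,d) ≥ 0` whenever `t ≥ 0` and
`∇gᵢ(x̄)z + t gᵢ''(x̄,d) ≤ 0` for all active `i` (for `t > 0` rescale `z` by `t⁻¹`), and Farkas'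
lemma for this homogeneous system in `(z, t)` produces the multipliers.
-/

open Set Filter Topology
open scoped Classical

noncomputable section

/-- The second-order directional derivative of `h` at `x` in direction `u` equals `D`. -/
def HasDirDeriv2 {s : ℕ} (h : (Fin s → ℝ) → ℝ) (x u : Fin s → ℝ) (D : ℝ) : Prop :=
  Filter.Tendsto (fun t : ℝ => 2 / t ^ 2 * (h (x + t • u) - h x - t * fderiv ℝ h x u))
    (𝓝[>] (0 : ℝ)) (𝓝 D)

/-- The set `A(x,d)` for the constraints `g`. -/
def setA {s : ℕ} (m : ℕ) (g : Fin m → (Fin s → ℝ) → ℝ) (x d : Fin s → ℝ) :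
    Set (Fin s → ℝ) :=
  {z | ∀ i, g i x = 0 → fderiv ℝ (g i) x d = 0 →
    ∃ δ > 0, ∀ t ∈ Ioo (0 : ℝ) δ, g i (x + t • d + (t ^ 2 / 2) • z) ≤ 0}

/-- The set `B(x,d)` for the constraints `g`, with `gdd i = g_i''(x,d)`. -/
def setB {s : ℕ} (m : ℕ) (g : Fin m → (Fin s → ℝ) → ℝ) (x d : Fin s → ℝ)
    (gdd : Fin m → ℝ) : Set (Fin s → ℝ) :=
  {z | ∀ i, g i x = 0 → fderiv ℝ (g i) x d = 0 → fderiv ℝ (g i) x z + gdd i ≤ 0}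

/-- The Bouligand tangent (contingent) cone to `S` at `x`. -/
def bouligandTangentCone {s : ℕ} (S : Set (Fin s → ℝ)) (x : Fin s → ℝ) :
    Set (Fin s → ℝ) :=
  {u | ∃ (t : ℕ → ℝ) (uk : ℕ → Fin s → ℝ),
    (∀ k, 0 < t k) ∧ Filter.Tendsto t Filter.atTop (𝓝 0) ∧
    Filter.Tendsto uk Filter.atTop (𝓝 u) ∧ ∀ k, x + t k • uk k ∈ S}

/-- The pseudotangent cone: the closed convex hull of the Bouligand tangent cone. -/
def pseudoTangentCone {s : ℕ} (S : Set (Fin s → ℝ)) (x : Fin s → ℝ) :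
    Set (Fin s → ℝ) :=
  closure (convexHull ℝ (bouligandTangentCone S x))

theorem exists_nonneg_sum_insert_smul_eq {R M ι : Type*} [Semiring R] [LE R]
    [AddCommMonoid M] [Module R M] {s : Finset ι} {j : ι} (hj : j ∉ s) (a : ι → M)
    {l : ι → R} (hl : ∀ i ∈ s, 0 ≤ l i) {c : R} (hc : 0 ≤ c) :
    ∃ l' : ι → R, (∀ i ∈ insert j s, 0 ≤ l' i) ∧
      ∑ i ∈ s, l i • a i + c • a j = ∑ i ∈ insert j s, l' i • a i := by
  classical
  have hupd : ∀ i ∈ s, Function.update l j c i = l i := fun i hi =>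
    Function.update_of_ne (ne_of_mem_of_not_mem hi hj) _ _
  refine ⟨Function.update l j c, Finset.forall_mem_insert _ _ _ |>.2 ⟨by simpa using hc,
    fun i hi => hupd i hi ▸ hl i hi⟩, ?_⟩
  rw [Finset.sum_insert hj, Function.update_self, add_comm]
  exact congrArg (c • a j + ·) (Finset.sum_congr rfl fun i hi => by rw [hupd i hi])

section Farkas

variable {𝕜 E ι : Type*} [Field 𝕜] [LinearOrder 𝕜] [IsStrictOrderedRing 𝕜]
  [AddCommGroup E] [Module 𝕜 E]

theorem exists_nonneg_sum_smul_eq_of_forall_nonpos_imp (s : Finset ι) (a : ι → E →ₗ[𝕜] 𝕜)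
    (b : E →ₗ[𝕜] 𝕜) (h : ∀ u, (∀ i ∈ s, a i u ≤ 0) → b u ≤ 0) :
    ∃ l : ι → 𝕜, (∀ i ∈ s, 0 ≤ l i) ∧ b = ∑ i ∈ s, l i • a i := by
  classical
  induction s using Finset.induction_on generalizing a b with
  | empty =>
    refine ⟨0, by simp, LinearMap.ext fun u => ?_⟩
    have h₁ := h u (by simp)
    have h₂ := h (-u) (by simp)
    simp only [map_neg, Finset.sum_empty, LinearMap.zero_apply] at h₂ ⊢
    linarith
  | insert j s hj ih =>
    suffices ∃ l : ι → 𝕜, (∀ i ∈ s, 0 ≤ l i) ∧ ∃ c : 𝕜, 0 ≤ c ∧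
        b - ∑ i ∈ s, l i • a i = c • a j by
      obtain ⟨l, hl, c, hc, hb⟩ := this
      obtain ⟨l', hl', hsum⟩ := exists_nonneg_sum_insert_smul_eq hj a hl hc
      exact ⟨l', hl', sub_eq_iff_eq_add'.1 hb ▸ hsum⟩
    by_cases hs : ∀ u, (∀ i ∈ s, a i u ≤ 0) → b u ≤ 0
    · obtain ⟨l, hl, rfl⟩ := ih a b hs
      exact ⟨l, hl, 0, le_rfl, by simp⟩
    push Not at hs
    obtain ⟨w, hws, hbw⟩ := hs
    have haw : 0 < a j w := by
      by_contra! hle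
      exact hbw.not_ge (h w (Finset.forall_mem_insert _ _ _ |>.2 ⟨hle, hws⟩))
    -- `P` projects along `w` onto the kernel of `a j`.
    set P : E →ₗ[𝕜] E := LinearMap.id - (a j w)⁻¹ • (a j).smulRight w
    have hP (φ : E →ₗ[𝕜] 𝕜) (u : E) : φ u = φ (P u) + a j u / a j w * φ w := by
      simp [P, div_eq_inv_mul, mul_assoc]
    have hPj (u : E) : a j (P u) = 0 := by
      linarith [hP (a j) u, div_mul_cancel₀ (a j u) haw.ne']
    obtain ⟨l, hl, hlb⟩ := ih (fun i => (a i).comp P) (b.comp P) fun u hu =>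
      h (P u) (Finset.forall_mem_insert _ _ _ |>.2 ⟨(hPj u).le, hu⟩)
    set ψ := b - ∑ i ∈ s, l i • a i
    have hψP (u : E) : ψ (P u) = 0 := by
      simpa [ψ, sub_eq_zero, LinearMap.sum_apply] using LinearMap.congr_fun hlb u
    refine ⟨l, hl, ψ w / a j w, div_nonneg ?_ haw.le, LinearMap.ext fun u => ?_⟩
    · have : ∑ i ∈ s, l i * a i w ≤ 0 := Finset.sum_nonpos fun i hi =>
        mul_nonpos_of_nonneg_of_nonpos (hl i hi) (hws i hi)
      simp only [ψ, LinearMap.sub_apply, LinearMap.sum_apply, LinearMap.smul_apply, smul_eq_mul]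
      linarith
    · rw [hP ψ u, hψP, zero_add, LinearMap.smul_apply, smul_eq_mul]
      ring

theorem exists_nonneg_multipliers_of_nonneg_on_polyhedron [Fintype ι] (I : Finset ι)
    (p : E →ₗ[𝕜] 𝕜) (c : 𝕜) (a : ι → E →ₗ[𝕜] 𝕜) (b : ι → 𝕜)
    (hcone : ∀ u, (∀ i ∈ I, a i u ≤ 0) → 0 ≤ p u)
    (hpoly : ∀ z, (∀ i ∈ I, a i z + b i ≤ 0) → 0 ≤ p z + c) :
    ∃ μ : ι → 𝕜, (∀ i, 0 ≤ μ i) ∧ (∀ i ∉ I, μ i = 0) ∧ p + ∑ i, μ i • a i = 0 ∧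
      0 ≤ c + ∑ i, μ i * b i := by
  -- Homogenize: `(z, t)` with `t > 0` stands for the point `t⁻¹ • z` of the polyhedron.
  let A : Option ι → E × 𝕜 →ₗ[𝕜] 𝕜 := fun o => o.elim (-LinearMap.snd 𝕜 E 𝕜)
    fun i => (a i).comp (LinearMap.fst 𝕜 E 𝕜) + b i • LinearMap.snd 𝕜 E 𝕜
  let B : E × 𝕜 →ₗ[𝕜] 𝕜 := -(p.comp (LinearMap.fst 𝕜 E 𝕜) + c • LinearMap.snd 𝕜 E 𝕜)
  have himp : ∀ q : E × 𝕜, (∀ o ∈ I.insertNone, A o q ≤ 0) → B q ≤ 0 := by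
    rintro ⟨z, t⟩ hq
    rw [Finset.forall_mem_insertNone] at hq
    obtain ⟨ht, hq⟩ := hq
    simp only [A, B, Option.elim_none, Option.elim_some, LinearMap.neg_apply,
      LinearMap.add_apply, LinearMap.comp_apply, LinearMap.fst_apply, LinearMap.smul_apply,
      LinearMap.snd_apply, smul_eq_mul, neg_nonpos] at ht hq ⊢
    rcases ht.eq_or_lt with rfl | ht
    · simpa using hcone z fun i hi => by simpa using hq i hi
    · have := hpoly (t⁻¹ • z) fun i hi => by
        rw [map_smul, smul_eq_mul, ← mul_le_mul_iff_of_pos_left ht, mul_zero]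
        field_simp
        simpa [mul_comm] using hq i hi
      rw [map_smul, smul_eq_mul] at this
      field_simp at this
      linarith
  obtain ⟨l, hl, hlA⟩ := exists_nonneg_sum_smul_eq_of_forall_nonpos_imp I.insertNone A B himp
  rw [Finset.forall_mem_insertNone] at hl
  have hstat : ∀ u, -p u = ∑ i ∈ I, l (some i) * a i u := fun u => by
    simpa [A, B, LinearMap.sum_apply] using LinearMap.congr_fun hlA (u, 0)
  have hsecond : -c = -l none + ∑ i ∈ I, l (some i) * b i := by
    simpa [A, B, LinearMap.sum_apply] using LinearMap.congr_fun hlA (0, 1)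
  refine ⟨fun i => if i ∈ I then l (some i) else 0, fun i => ?_, fun i hi => if_neg hi,
    LinearMap.ext fun u => ?_, ?_⟩
  · dsimp only
    split_ifs with hi
    exacts [hl.2 i hi, le_rfl]
  · simp only [LinearMap.add_apply, LinearMap.sum_apply, LinearMap.smul_apply, smul_eq_mul,
      ite_mul, zero_mul, Finset.sum_ite_mem, Finset.univ_inter, LinearMap.zero_apply]
    linarith [hstat u]
  · simp only [ite_mul, zero_mul, Finset.sum_ite_mem, Finset.univ_inter]
    linarith [hl.1]

end Farkas

theorem bouligandTangentCone_subset_posTangentConeAt {s : ℕ} (S : Set (Fin s → ℝ))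
    (x : Fin s → ℝ) : bouligandTangentCone S x ⊆ posTangentConeAt S x := by
  rintro u ⟨t, v, ht, ht0, hv, hS⟩
  refine mem_tangentConeAt_of_seq atTop (fun k => (t k)⁻¹.toNNReal)
    (fun k => t k • v k) (by simpa using ht0.smul hv) (.of_forall hS) ?_
  refine hv.congr fun k => ?_
  rw [NNReal.smul_def, Real.coe_toNNReal _ (inv_pos.2 (ht k)).le, smul_smul,
    inv_mul_cancel₀ (ht k).ne', one_smul]

theorem IsLocalMinOn.nonneg_of_mem_pseudoTangentCone {s : ℕ} {f : (Fin s → ℝ) → ℝ}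
    {f' : (Fin s → ℝ) →L[ℝ] ℝ} {S : Set (Fin s → ℝ)} {x u : Fin s → ℝ}
    (hmin : IsLocalMinOn f S x) (hf : HasFDerivAt f f' x) (hu : u ∈ pseudoTangentCone S x) :
    0 ≤ f' u := by
  refine closure_minimal (convexHull_min (fun v hv => ?_) ?_) (isClosed_le continuous_const
    f'.continuous) hu
  · exact hmin.hasFDerivWithinAt_nonneg hf.hasFDerivWithinAt
      (bouligandTangentCone_subset_posTangentConeAt S x hv)
  · exact (convex_Ici 0).linear_preimage f'.toLinearMap

section Parabola

variable {E : Type*} [NormedAddCommGroup E] [NormedSpace ℝ E]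

theorem hasDerivAt_parabola (x d z : E) :
    HasDerivAt (fun t : ℝ => x + t • d + (t ^ 2 / 2) • z) d 0 := by
  have := (((hasDerivAt_id (0 : ℝ)).smul_const d).const_add x).fun_add
    (((hasDerivAt_pow 2 (0 : ℝ)).div_const 2).smul_const z)
  simpa using this

theorem tendsto_parabola (x d z : E) :
    Tendsto (fun t : ℝ => x + t • d + (t ^ 2 / 2) • z) (𝓝[>] 0) (𝓝 x) := by
  simpa using (hasDerivAt_parabola x d z).continuousAt.tendsto.mono_left nhdsWithin_le_nhds

theorem eventually_neg_comp_parabola {g : E → ℝ} {g' : E →L[ℝ] ℝ} {x : E} (d z : E)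
    (hg : HasFDerivAt g g' x) (hgx : g x = 0) (hd : g' d < 0) :
    ∀ᶠ t : ℝ in 𝓝[>] 0, g (x + t • d + (t ^ 2 / 2) • z) < 0 := by
  have hslope : Tendsto (fun t : ℝ => t⁻¹ * g (x + t • d + (t ^ 2 / 2) • z)) (𝓝[>] 0)
      (𝓝 (g' d)) := by
    simpa [hgx] using (hg.comp_hasDerivAt_of_eq 0 (hasDerivAt_parabola x d z)
      (by simp)).tendsto_slope_zero_right
  filter_upwards [hslope.eventually_lt_const hd, self_mem_nhdsWithin] with t hneg (ht : 0 < t)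
  exact neg_of_mul_neg_right hneg (inv_nonneg.2 ht.le)

end Parabola

theorem HasDirDeriv2.tendsto_along_parabola {s : ℕ} {f : (Fin s → ℝ) → ℝ} {x d : Fin s → ℝ}
    {D : ℝ} (hD : HasDirDeriv2 f x d D) (hf : HasStrictFDerivAt f (fderiv ℝ f x) x)
    (z : Fin s → ℝ) :
    Tendsto (fun t : ℝ => 2 / t ^ 2 * (f (x + t • d + (t ^ 2 / 2) • z) - f x
      - t * fderiv ℝ f x d)) (𝓝[>] 0) (𝓝 (fderiv ℝ f x z + D)) := by
  set f' := fderiv ℝ f x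
  have hpair : Tendsto (fun t : ℝ => (x + t • d + (t ^ 2 / 2) • z, x + t • d)) (𝓝[>] 0)
      (𝓝 (x, x)) :=
    (tendsto_parabola x d z).prodMk_nhds (by simpa using tendsto_parabola x d 0)
  have hsq : (fun t : ℝ => (t ^ 2 / 2) • z) =O[𝓝[>] 0] fun t => t ^ 2 :=
    .of_bound ‖z‖ (.of_forall fun t => by
      rw [norm_smul, Real.norm_of_nonneg (by positivity), Real.norm_of_nonneg (by positivity)]
      nlinarith [norm_nonneg z, sq_nonneg t])
  -- Strict differentiability compares the parabola with the ray `x + t • d`.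
  have hrem : (fun t : ℝ => f (x + t • d + (t ^ 2 / 2) • z) - f (x + t • d)
      - f' ((t ^ 2 / 2) • z)) =o[𝓝[>] 0] fun t => t ^ 2 := by
    have := hf.isLittleO.comp_tendsto hpair
    simp only [Function.comp_def, add_sub_cancel_left] at this
    exact this.trans_isBigO hsq
  have hlim := (hrem.tendsto_div_nhds_zero.const_mul 2).add (hD.const_add (f' z))
  rw [mul_zero, zero_add] at hlim
  refine hlim.congr' ?_
  filter_upwards [self_mem_nhdsWithin] with t (ht : 0 < t)
  rw [map_smul, smul_eq_mul]
  field_simp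
  ring

theorem IsLocalMinOn.fderiv_add_nonneg_of_eventually_parabola_mem {s : ℕ} {f : (Fin s → ℝ) → ℝ}
    {S : Set (Fin s → ℝ)} {x d z : Fin s → ℝ} {D : ℝ} (hmin : IsLocalMinOn f S x)
    (hf : HasStrictFDerivAt f (fderiv ℝ f x) x) (hcrit : fderiv ℝ f x d ≤ 0)
    (hD : HasDirDeriv2 f x d D)
    (hS : ∀ᶠ t : ℝ in 𝓝[>] 0, x + t • d + (t ^ 2 / 2) • z ∈ S) :
    0 ≤ fderiv ℝ f x z + D := by
  have hle : ∀ᶠ t : ℝ in 𝓝[>] 0, f x ≤ f (x + t • d + (t ^ 2 / 2) • z) :=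
    (tendsto_nhdsWithin_iff.2 ⟨tendsto_parabola x d z, hS⟩).eventually hmin
  refine ge_of_tendsto (hD.tendsto_along_parabola hf z) ?_
  filter_upwards [hle, self_mem_nhdsWithin] with t hft (ht : 0 < t)
  have : t * fderiv ℝ f x d ≤ 0 := mul_nonpos_of_nonneg_of_nonpos ht.le hcrit
  exact mul_nonneg (by positivity) (by linarith)

theorem eventually_parabola_mem_feasible {s m : ℕ} {X : Set (Fin s → ℝ)}
    {g : Fin m → (Fin s → ℝ) → ℝ} {x d z : Fin s → ℝ} (hX : X ∈ 𝓝 x) (hfeas : ∀ i, g i x ≤ 0)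
    (hcont : ∀ i, g i x ≠ 0 → ContinuousAt (g i) x)
    (hdiff : ∀ i, g i x = 0 → DifferentiableAt ℝ (g i) x)
    (hcrit : ∀ i, g i x = 0 → fderiv ℝ (g i) x d ≤ 0) (hz : z ∈ setA m g x d) :
    ∀ᶠ t : ℝ in 𝓝[>] 0, x + t • d + (t ^ 2 / 2) • z ∈ {y | y ∈ X ∧ ∀ i, g i y ≤ 0} := by
  have hg (i : Fin m) : ∀ᶠ t : ℝ in 𝓝[>] 0, g i (x + t • d + (t ^ 2 / 2) • z) ≤ 0 := by
    by_cases hactive : g i x = 0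
    · by_cases hdi : fderiv ℝ (g i) x d = 0
      · obtain ⟨δ, hδ, hneg⟩ := hz i hactive hdi
        filter_upwards [Ioo_mem_nhdsGT hδ] using hneg
      · exact (eventually_neg_comp_parabola d z (hdiff i hactive).hasFDerivAt hactive
          ((hcrit i hactive).lt_of_ne hdi)).mono fun _ => le_of_lt
    · exact (((hcont i hactive).tendsto.comp (tendsto_parabola x d z)).eventually_lt_const
        ((hfeas i).lt_of_ne hactive)).mono fun _ => le_of_lt
  filter_upwards [(tendsto_parabola x d z).eventually hX, eventually_all.2 hg] with t hXt hgt
  exact ⟨hXt, hgt⟩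

theorem IsLocalMinOn.fderiv_add_nonneg_of_mem_setB {s m : ℕ} {X : Set (Fin s → ℝ)}
    {f : (Fin s → ℝ) → ℝ} {g : Fin m → (Fin s → ℝ) → ℝ} {x d z : Fin s → ℝ} {D : ℝ}
    {gdd : Fin m → ℝ} (hmin : IsLocalMinOn f {y | y ∈ X ∧ ∀ i, g i y ≤ 0} x) (hX : X ∈ 𝓝 x)
    (hfeas : ∀ i, g i x ≤ 0) (hcont : ∀ i, g i x ≠ 0 → ContinuousAt (g i) x)
    (hf : HasStrictFDerivAt f (fderiv ℝ f x) x)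
    (hg : ∀ i, g i x = 0 → DifferentiableAt ℝ (g i) x) (hcritf : fderiv ℝ f x d ≤ 0)
    (hcritg : ∀ i, g i x = 0 → fderiv ℝ (g i) x d ≤ 0) (hD : HasDirDeriv2 f x d D)
    (hCQ : closure (setA m g x d) = setB m g x d gdd) (hz : z ∈ setB m g x d gdd) :
    0 ≤ fderiv ℝ f x z + D := by
  refine closure_minimal (t := {w | 0 ≤ fderiv ℝ f x w + D}) (fun w hw => ?_)
    (isClosed_le continuous_const ((fderiv ℝ f x).continuous.add continuous_const)) (hCQ ▸ hz)
  exact hmin.fderiv_add_nonneg_of_eventually_parabola_mem hf hcritf hD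
    (eventually_parabola_mem_feasible hX hfeas hcont hg hcritg hw)

theorem statement10_general {s m : ℕ} (X : Set (Fin s → ℝ)) (hX : IsOpen X)
    (f : (Fin s → ℝ) → ℝ) (g : Fin m → (Fin s → ℝ) → ℝ)
    (xbar d : Fin s → ℝ) (hxX : xbar ∈ X) (hfeas : ∀ i, g i xbar ≤ 0)
    -- local minimizer of the scalar problem (P)
    (hmin : ∃ U ∈ 𝓝 xbar, ∀ y ∈ U, y ∈ X → (∀ i, g i y ≤ 0) → f xbar ≤ f y)
    -- d is a nonzero critical direction
    (hcritf : fderiv ℝ f xbar d ≤ 0)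
    (hcritg : ∀ i, g i xbar = 0 → fderiv ℝ (g i) xbar d ≤ 0)
    -- Conditions (C)
    (hCont : ∀ i, g i xbar ≠ 0 → ContinuousAt (g i) xbar)
    (hfC1 : ContDiffOn ℝ 1 f X)
    (hgC1 : ∀ i, g i xbar = 0 → ContDiffOn ℝ 1 (g i) X)
    -- existence of the second-order directional derivatives
    (fdd : ℝ) (gdd : Fin m → ℝ)
    (hfdd : HasDirDeriv2 f xbar d fdd)
    -- second-order Zangwill constraint qualification
    (hCQ : closure (setA m g xbar d) = setB m g xbar d gdd)
    -- Guignard constraint qualification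
    (hGuignard : {u : Fin s → ℝ | ∀ i, g i xbar = 0 → fderiv ℝ (g i) xbar u ≤ 0} =
      pseudoTangentCone {y | y ∈ X ∧ ∀ i, g i y ≤ 0} xbar) :
    ∃ mu : Fin m → ℝ,
      (∀ i, 0 ≤ mu i) ∧
      (∀ i, mu i * g i xbar = 0) ∧
      (fderiv ℝ f xbar + ∑ i, mu i • fderiv ℝ (g i) xbar = 0) ∧
      0 ≤ fdd + ∑ i, (if g i xbar = 0 then mu i * gdd i else 0) := by
  set S := {y | y ∈ X ∧ ∀ i, g i y ≤ 0}
  set I := Finset.univ.filter fun i => g i xbar = 0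
  have hXn : X ∈ 𝓝 xbar := hX.mem_nhds hxX
  have hloc : IsLocalMinOn f S xbar := by
    obtain ⟨U, hU, hUmin⟩ := hmin
    filter_upwards [nhdsWithin_le_nhds hU, self_mem_nhdsWithin] with y hyU hyS
    exact hUmin y hyU hyS.1 hyS.2
  have hf : HasStrictFDerivAt f (fderiv ℝ f xbar) xbar :=
    (hfC1.contDiffAt hXn).hasStrictFDerivAt one_ne_zero
  have hg (i) (hi : g i xbar = 0) : DifferentiableAt ℝ (g i) xbar :=
    ((hgC1 i hi).contDiffAt hXn).differentiableAt one_ne_zero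
  have hcone (u) (hu : ∀ i ∈ I, fderiv ℝ (g i) xbar u ≤ 0) : 0 ≤ fderiv ℝ f xbar u :=
    hloc.nonneg_of_mem_pseudoTangentCone hf.hasFDerivAt
      (hGuignard ▸ fun i hi => hu i (by simpa [I] using hi))
  have hpoly (z) (hz : ∀ i ∈ I, fderiv ℝ (g i) xbar z + gdd i ≤ 0) :
      0 ≤ fderiv ℝ f xbar z + fdd :=
    hloc.fderiv_add_nonneg_of_mem_setB hXn hfeas hCont hf hg hcritf hcritg hfdd hCQ
      fun i hi _ => hz i (by simpa [I] using hi)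
  obtain ⟨μ, hμ, hμI, hstat, hsecond⟩ := exists_nonneg_multipliers_of_nonneg_on_polyhedron I
    (fderiv ℝ f xbar : (Fin s → ℝ) →ₗ[ℝ] ℝ) fdd (fun i => fderiv ℝ (g i) xbar) gdd hcone hpoly
  have hμ0 (i) (hi : g i xbar ≠ 0) : μ i = 0 := hμI i (by simpa [I] using hi)
  refine ⟨μ, hμ, fun i => ?_, ContinuousLinearMap.ext fun u => ?_, ?_⟩
  · by_cases hi : g i xbar = 0 <;> simp [hi, hμ0]
  · simpa using LinearMap.congr_fun hstat u
  · have hactive (i) : (if g i xbar = 0 then μ i * gdd i else 0) = μ i * gdd i := by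
      by_cases hi : g i xbar = 0 <;> simp [hi, hμ0]
    simpa only [hactive] using hsecond

/-- dual second-order KKT conditions for the scalar problem (P): if `x̄` is a
local minimizer of (P), `d` a nonzero critical direction, Conditions (C) hold, the second-order
Zangwill CQ `cl(A(x̄,d)) = B(x̄,d)` and the Guignard CQ `L(x̄) = PT(S,x̄)` hold, and the
second-order directional derivatives exist, then there exist multipliers `μ ≥ 0` with
`μ_i g_i(x̄) = 0`, `∇f(x̄) + Σ μ_i ∇g_i(x̄) = 0`, and
`f''(x̄,d) + Σ_{i∈I(x̄)} μ_i g_i''(x̄,d) ≥ 0`. -/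
theorem statement10 {s m : ℕ} (X : Set (Fin s → ℝ)) (hX : IsOpen X)
    (f : (Fin s → ℝ) → ℝ) (g : Fin m → (Fin s → ℝ) → ℝ)
    (xbar d : Fin s → ℝ) (hxX : xbar ∈ X) (hfeas : ∀ i, g i xbar ≤ 0)
    -- local minimizer of the scalar problem (P)
    (hmin : ∃ U ∈ 𝓝 xbar, ∀ y ∈ U, y ∈ X → (∀ i, g i y ≤ 0) → f xbar ≤ f y)
    -- d is a nonzero critical direction
    (hd : d ≠ 0)
    (hcritf : fderiv ℝ f xbar d ≤ 0)
    (hcritg : ∀ i, g i xbar = 0 → fderiv ℝ (g i) xbar d ≤ 0)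
    -- Conditions (C)
    (hCont : ∀ i, g i xbar ≠ 0 → ContinuousAt (g i) xbar)
    (hfC1 : ContDiffOn ℝ 1 f X)
    (hgC1 : ∀ i, g i xbar = 0 → ContDiffOn ℝ 1 (g i) X)
    -- existence of the second-order directional derivatives
    (fdd : ℝ) (gdd : Fin m → ℝ)
    (hfdd : HasDirDeriv2 f xbar d fdd)
    (hgdd : ∀ i, g i xbar = 0 → HasDirDeriv2 (g i) xbar d (gdd i))
    -- second-order Zangwill constraint qualification
    (hCQ : closure (setA m g xbar d) = setB m g xbar d gdd)
    -- Guignard constraint qualification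
    (hGuignard : {u : Fin s → ℝ | ∀ i, g i xbar = 0 → fderiv ℝ (g i) xbar u ≤ 0} =
      pseudoTangentCone {y | y ∈ X ∧ ∀ i, g i y ≤ 0} xbar) :
    ∃ mu : Fin m → ℝ,
      (∀ i, 0 ≤ mu i) ∧
      (∀ i, mu i * g i xbar = 0) ∧
      (fderiv ℝ f xbar + ∑ i, mu i • fderiv ℝ (g i) xbar = 0) ∧
      0 ≤ fdd + ∑ i, (if g i xbar = 0 then mu i * gdd i else 0) :=
  statement10_general X hX f g xbar d hxX hfeas hmin hcritf hcritg hCont hfC1 hgC1 fdd gdd hfdd hCQ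
    hGuignard
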